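/- For the Milne universe, a(t) = t (so b(t) = t, ḃ ≡ 1, σ∞(τ) = ∞), the following hold for all τ > 0 and σ ≥ 1: ρ_τ(σ) = τ·√((σ−1)/σ); χ(τ,σ) = artanh(√((σ−1)/σ)) = ln(√σ + √(σ−1)); t(τ,σ) = τ/√σ = √(τ² − ρ_τ(σ)²); the proper radius of the Fermi space slice is ρ_{M_τ} = τ = 1/H(τ), so the universal bound ρ_{M_τ} ≤ 1/H is attained; and the Fermi relative speed of a comoving particle is v_F(σ) = √((σ−1)/σ) = ρ_τ(σ)/τ, which is strictly less than the speed of light (= 1). -/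

import Mathlib

open Real MeasureTheory Filter Set intervalIntegral
open scoped Topology

/-! With `ḃ ≡ 1` both integrals are elementary: `2 √((s - 1) / s)` and `2 log (√s + √(s - 1))`
are antiderivatives of the two integrands on `(1, ∞)`. Since the integrands are positive, the
improper integrals at the singular endpoint `s = 1` converge and the fundamental theorem of
calculus applies without a separate integrability argument. Everything else is algebra of square roots
and the limit `√((σ - 1) / σ) → 1`. -/

theorem integral_eq_sub_of_hasDerivAt_of_nonneg {f f' : ℝ → ℝ} {a b : ℝ} (hab : a ≤ b)
    (hcont : ContinuousOn f (Icc a b)) (hderiv : ∀ x ∈ Ioo a b, HasDerivAt f (f' x) x)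
    (hpos : ∀ x ∈ Ioo a b, 0 ≤ f' x) : ∫ x in a..b, f' x = f b - f a :=
  integral_eq_sub_of_hasDerivAt_of_le hab hcont hderiv <|
    (intervalIntegrable_iff_integrableOn_Ioc_of_le hab).2
      (integrableOn_deriv_of_nonneg hcont hderiv hpos)

theorem hasDerivAt_two_mul_sqrt_sub_one_div {x : ℝ} (hx : 1 < x) :
    HasDerivAt (fun s => 2 * √((s - 1) / s)) (1 / (x * √x * √(x - 1))) x := by
  have hx0 : 0 < x := by linarith
  have hx1 : 0 < x - 1 := by linarith
  have hquot : HasDerivAt (fun s => (s - 1) / s) (1 / x ^ 2) x :=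
    (((hasDerivAt_id x).sub_const 1).div (hasDerivAt_id x) hx0.ne').congr_deriv (by simp)
  refine ((hquot.sqrt (div_pos hx1 hx0).ne').const_mul 2).congr_deriv ?_
  have hsx : √x ^ 2 = x := sq_sqrt hx0.le
  have : 0 < √x := sqrt_pos.2 hx0
  have : 0 < √(x - 1) := sqrt_pos.2 hx1
  rw [sqrt_div hx1.le]
  field_simp
  linear_combination hsx

theorem hasDerivAt_two_mul_log_sqrt_add_sqrt_sub_one {x : ℝ} (hx : 1 < x) :
    HasDerivAt (fun s => 2 * log (√s + √(s - 1))) (1 / (√x * √(x - 1))) x := by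
  have hx0 : 0 < x := by linarith
  have hx1 : 0 < x - 1 := by linarith
  have : 0 < √x := sqrt_pos.2 hx0
  have : 0 < √(x - 1) := sqrt_pos.2 hx1
  have hsum : HasDerivAt (fun s => √s + √(s - 1))
      (1 / (2 * √x) + 1 / (2 * √(x - 1))) x := by
    refine (hasDerivAt_sqrt hx0.ne').add ?_
    simpa using ((hasDerivAt_id x).sub_const 1).sqrt hx1.ne'
  refine ((hsum.log (by positivity)).const_mul 2).congr_deriv ?_
  field_simp
  ring

theorem integral_one_div_mul_sqrt_mul_sqrt_sub_one {σ : ℝ} (hσ : 1 ≤ σ) :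
    ∫ s in (1 : ℝ)..σ, 1 / (s * √s * √(s - 1)) = 2 * √((σ - 1) / σ) := by
  have hcont : ContinuousOn (fun s : ℝ => 2 * √((s - 1) / s)) (Icc 1 σ) :=
    continuousOn_const.mul <| ContinuousOn.sqrt <|
      (continuousOn_id.sub continuousOn_const).div continuousOn_id
        fun x hx => (zero_lt_one.trans_le hx.1).ne'
  rw [integral_eq_sub_of_hasDerivAt_of_nonneg hσ hcont
    (fun x hx => hasDerivAt_two_mul_sqrt_sub_one_div hx.1)
    fun x hx => one_div_nonneg.2 <|
      mul_nonneg (mul_nonneg (by linarith [hx.1]) (sqrt_nonneg _)) (sqrt_nonneg _)]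
  norm_num

theorem integral_one_div_sqrt_mul_sqrt_sub_one {σ : ℝ} (hσ : 1 ≤ σ) :
    ∫ s in (1 : ℝ)..σ, 1 / (√s * √(s - 1)) = 2 * log (√σ + √(σ - 1)) := by
  have hcont : ContinuousOn (fun s : ℝ => 2 * log (√s + √(s - 1))) (Icc 1 σ) := by
    refine continuousOn_const.mul <| ContinuousOn.log (by fun_prop) fun x hx => ?_
    have : 0 < √x := sqrt_pos.2 (zero_lt_one.trans_le hx.1)
    positivity
  rw [integral_eq_sub_of_hasDerivAt_of_nonneg hσ hcont
    (fun x hx => hasDerivAt_two_mul_log_sqrt_add_sqrt_sub_one hx.1) (fun x _ => by positivity)]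
  norm_num

theorem sqrt_sub_one_div_lt_one {σ : ℝ} (hσ : 0 < σ) : √((σ - 1) / σ) < 1 :=
  (sqrt_lt' one_pos).2 (by rw [one_pow, div_lt_one hσ]; linarith)

theorem sqrt_sub_one_div_mem_Icc {σ : ℝ} (hσ : 0 < σ) : √((σ - 1) / σ) ∈ Icc (-1) 1 :=
  ⟨by linarith [sqrt_nonneg ((σ - 1) / σ)], (sqrt_sub_one_div_lt_one hσ).le⟩

theorem artanh_sqrt_sub_one_div {σ : ℝ} (hσ : 1 ≤ σ) :
    artanh √((σ - 1) / σ) = log (√σ + √(σ - 1)) := by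
  have hσ0 : 0 < σ := by linarith
  have hv := sqrt_sub_one_div_lt_one hσ0
  rw [artanh_eq_half_log (sqrt_sub_one_div_mem_Icc hσ0)]
  set a := √σ
  set b := √(σ - 1)
  have ha : 0 < a := sqrt_pos.2 hσ0
  have ha2 : a ^ 2 = σ := sq_sqrt hσ0.le
  have hb2 : b ^ 2 = σ - 1 := sq_sqrt (by linarith)
  have hba : √((σ - 1) / σ) = b / a := sqrt_div (by linarith) σ
  rw [hba] at hv ⊢
  -- `(a + b) (a - b) = a² - b² = 1`, so `(1 + b/a) / (1 - b/a) = (a + b)²`.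
  have hsq : (1 + b / a) / (1 - b / a) = (a + b) ^ 2 := by
    rw [div_eq_iff (by linarith), one_sub_div ha.ne', one_add_div ha.ne']
    field_simp
    linear_combination (a + b) * (hb2 - ha2)
  rw [hsq, log_pow]
  ring

theorem div_sqrt_eq_sqrt_sq_sub_sq {τ σ : ℝ} (hτ : 0 ≤ τ) (hσ : 1 ≤ σ) :
    τ / √σ = √(τ ^ 2 - (τ * √((σ - 1) / σ)) ^ 2) := by
  have hσ0 : 0 < σ := by linarith
  have hsq : τ ^ 2 - (τ * √((σ - 1) / σ)) ^ 2 = τ ^ 2 / σ := by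
    rw [mul_pow, sq_sqrt (div_nonneg (by linarith) hσ0.le)]
    field_simp
    ring
  rw [hsq, sqrt_div (sq_nonneg τ), sqrt_sq hτ]

theorem tendsto_sqrt_sub_one_div_atTop :
    Tendsto (fun u : ℝ => √((u - 1) / u)) atTop (𝓝 1) := by
  have hquot : Tendsto (fun u : ℝ => (u - 1) / u) atTop (𝓝 1) := by
    have h := tendsto_const_nhds (x := (1 : ℝ)).sub tendsto_inv_atTop_zero
    rw [sub_zero] at h
    refine h.congr' ?_
    filter_upwards [eventually_gt_atTop 0] with u hu
    field_simp
  simpa using hquot.sqrt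

/-- the Milne universe a(t) = t (b = id, ḃ ≡ 1):
explicit formulas for ρ_τ(σ), χ(τ,σ), t(τ,σ), the proper radius ρ_{M_τ} = τ = 1/H(τ),
and the (necessarily subluminal) Fermi relative speed v_F(σ) = √((σ-1)/σ) = ρ_τ(σ)/τ. -/
theorem milne_universe (τ σ : ℝ) (hτ : 0 < τ) (hσ : 1 ≤ σ) :
    -- ρ_τ(σ) = τ·√((σ-1)/σ)
    (τ / 2) * (∫ s in (1:ℝ)..σ, 1 / (s * Real.sqrt s * Real.sqrt (s - 1))) =
      τ * Real.sqrt ((σ - 1) / σ) ∧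
    -- χ(τ,σ) = artanh(√((σ-1)/σ)) (artanh x = (1/2)·ln((1+x)/(1-x)))
    (1 / 2) * (∫ s in (1:ℝ)..σ, 1 / (Real.sqrt s * Real.sqrt (s - 1))) =
      (1 / 2) * Real.log ((1 + Real.sqrt ((σ - 1) / σ)) / (1 - Real.sqrt ((σ - 1) / σ))) ∧
    -- χ(τ,σ) = ln(√σ + √(σ-1))
    (1 / 2) * (∫ s in (1:ℝ)..σ, 1 / (Real.sqrt s * Real.sqrt (s - 1))) =
      Real.log (Real.sqrt σ + Real.sqrt (σ - 1)) ∧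
    -- t(τ,σ) = τ/√σ = √(τ² - ρ_τ(σ)²)
    τ / Real.sqrt σ = Real.sqrt (τ ^ 2 - (τ * Real.sqrt ((σ - 1) / σ)) ^ 2) ∧
    -- ρ_{M_τ} = lim_{σ→∞} ρ_τ(σ) = τ
    Tendsto (fun u : ℝ => (τ / 2) * ∫ s in (1:ℝ)..u, 1 / (s * Real.sqrt s * Real.sqrt (s - 1)))
      atTop (nhds τ) ∧
    -- τ = 1/H(τ), so the universal bound ρ_{M_τ} ≤ 1/H is attained
    τ = 1 / (deriv (fun x : ℝ => x) τ / τ) ∧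
    -- v_F(σ) = √((σ-1)/σ)
    (1 / 2) * (∫ s in (1:ℝ)..σ, 1 / (s * Real.sqrt s * Real.sqrt (s - 1))) =
      Real.sqrt ((σ - 1) / σ) ∧
    -- v_F(σ) = ρ_τ(σ)/τ
    Real.sqrt ((σ - 1) / σ) = τ * Real.sqrt ((σ - 1) / σ) / τ ∧
    -- v_F(σ) < 1 (strictly less than the speed of light)
    Real.sqrt ((σ - 1) / σ) < 1 := by
  have hχ := integral_one_div_sqrt_mul_sqrt_sub_one hσ
  have hρ := integral_one_div_mul_sqrt_mul_sqrt_sub_one hσ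
  have hσ0 : 0 < σ := by linarith
  have hχ_artanh := artanh_sqrt_sub_one_div hσ
  rw [artanh_eq_half_log (sqrt_sub_one_div_mem_Icc hσ0)] at hχ_artanh
  have hρ_lim : Tendsto (fun u : ℝ => (τ / 2) * ∫ s in (1:ℝ)..u, 1 / (s * √s * √(s - 1)))
      atTop (𝓝 τ) := by
    have hlim : Tendsto (fun u : ℝ => τ * √((u - 1) / u)) atTop (𝓝 τ) := by
      simpa using tendsto_sqrt_sub_one_div_atTop.const_mul τ
    refine hlim.congr' ?_
    filter_upwards [eventually_ge_atTop 1] with u hu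
    rw [integral_one_div_mul_sqrt_mul_sqrt_sub_one hu]
    ring
  refine ⟨by rw [hρ]; ring, by rw [hχ, hχ_artanh]; ring, by rw [hχ]; ring,
    div_sqrt_eq_sqrt_sq_sub_sq hτ.le hσ, hρ_lim, by rw [deriv_id'', one_div_div, div_one],
    by rw [hρ]; ring, (mul_div_cancel_left₀ _ hτ.ne').symm,
    sqrt_sub_one_div_lt_one hσ0⟩
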